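/- arXiv:1209.0739 — 2 statements merged into one kernel-verified Lean document; each statement's English description precedes it below -/
import Mathlib

section
/- Let p, q be positive integers, n = p + q, and let v be an ascending shuffle in S_n. If w is any permutation of {1,…,n} with r_w(i,p) = r_v(i,p) for all i ∈ {1,…,n}, then v ≤ w in the Bruhat order. In other words, v is the unique minimal element of the set {w ∈ S_n : r_w(i,p) = r_v(i,p) for all i}. -/
/-- The rank function `r_w(i,j) = #{k ≤ i : w(k) ≤ j}` (positions and values 1-indexed). -/
def rk {n : ℕ} (w : Equiv.Perm (Fin n)) (i j : ℕ) : ℕ :=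
  (Finset.univ.filter (fun k : Fin n => (k : ℕ) + 1 ≤ i ∧ (w k : ℕ) + 1 ≤ j)).card

/-- The Bruhat order: `u ≤ v` iff `r_u(i,j) ≥ r_v(i,j)` for all `i, j`. -/
def BruhatLE {n : ℕ} (u v : Equiv.Perm (Fin n)) : Prop :=
  ∀ i j : ℕ, rk v i j ≤ rk u i j

/-- `v` is an ascending shuffle of `1,…,p` and `p+1,…,n`. -/
def AscShuffle (p : ℕ) {n : ℕ} (v : Equiv.Perm (Fin n)) : Prop :=
  ∀ i j : Fin n, i < j →
    ((v i : ℕ) + 1 ≤ p ∧ (v j : ℕ) + 1 ≤ p → v i < v j) ∧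
    (p < (v i : ℕ) + 1 ∧ p < (v j : ℕ) + 1 → v i < v j)

/-!
Write `P_u(i)` for the set of values of `u` on the first `i` positions, so that `r_u(i, j)` counts
the elements of `P_u(i)` below `j`. Split the values (0-indexed, as in `Fin n`) into the small
block `[0, p)` and the large block `[p, n)`. The hypothesis says the small parts of `P_w(i)` and
`P_v(i)` have the same size, hence so do the large parts. For an ascending shuffle `v` each part of
`P_v(i)` is an initial segment of its block, and among subsets of a block of a given size an
initial segment has the most elements below any `j`; adding the two blocks gives
`r_w(i, j) ≤ r_v(i, j)`.
-/

open Finset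

namespace Finset

theorem eq_Ico_add_card_of_le_mem {T : Finset ℕ} {lo : ℕ} (hlo : ∀ x ∈ T, lo ≤ x)
    (hdown : ∀ x ∈ T, ∀ y, lo ≤ y → y ≤ x → y ∈ T) : T = Ico lo (lo + #T) := by
  have hsub : T ⊆ Ico lo (lo + #T) := by
    intro x hx
    by_contra hout
    have hIcc : Icc lo x ⊆ T := fun y hy => hdown x hx y (mem_Icc.1 hy).1 (mem_Icc.1 hy).2
    have := card_le_card hIcc
    simp only [Nat.card_Icc, mem_Ico, hlo x hx, true_and, not_lt] at this hout
    omega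
  exact eq_of_subset_of_card_le hsub (by simp)

theorem card_filter_lt_le_of_eq_Ico {S T : Finset ℕ} {lo : ℕ} (hS : ∀ x ∈ S, lo ≤ x)
    (hT : T = Ico lo (lo + #T)) (hcard : #S = #T) (c : ℕ) :
    #{x ∈ S | x < c} ≤ #{x ∈ T | x < c} := by
  have hle_card : #{x ∈ S | x < c} ≤ #S := card_filter_le _ _
  have hle_width : #{x ∈ S | x < c} ≤ #(Ico lo c) :=
    card_le_card fun x hx => by
      simp only [mem_filter] at hx
      exact mem_Ico.2 ⟨hS x hx.1, hx.2⟩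
  rw [Nat.card_Ico] at hle_width
  rw [hT, Ico_filter_lt, Nat.card_Ico]
  omega

theorem card_filter_lt_eq_add (S : Finset ℕ) (p j : ℕ) :
    #{x ∈ S | x < j} = #{x ∈ {x ∈ S | x < p} | x < j} + #{x ∈ {x ∈ S | p ≤ x} | x < j} := by
  rw [filter_filter, filter_filter, ← card_filter_add_card_filter_not (fun x => x < p)]
  simp only [filter_filter, not_lt]
  congr 2 <;> ext x <;> simp [and_comm]

end Finset

section Permutations

variable {n : ℕ}

def prefixValues (u : Equiv.Perm (Fin n)) (i : ℕ) : Finset ℕ :=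
  ({k : Fin n | (k : ℕ) < i} : Finset (Fin n)).map (u.toEmbedding.trans Fin.valEmbedding)

theorem mem_prefixValues {u : Equiv.Perm (Fin n)} {i x : ℕ} :
    x ∈ prefixValues u i ↔ ∃ k : Fin n, (k : ℕ) < i ∧ (u k : ℕ) = x := by
  simp [prefixValues]

theorem card_prefixValues (u v : Equiv.Perm (Fin n)) (i : ℕ) :
    #(prefixValues u i) = #(prefixValues v i) := by
  simp only [prefixValues, card_map]

theorem rk_eq_card_prefixValues (u : Equiv.Perm (Fin n)) (i j : ℕ) :
    rk u i j = #{x ∈ prefixValues u i | x < j} := by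
  rw [prefixValues, filter_map, card_map, filter_filter]
  rfl

theorem rk_zero_left (u : Equiv.Perm (Fin n)) (j : ℕ) : rk u 0 j = 0 := by
  simp [rk]

theorem rk_min_left (u : Equiv.Perm (Fin n)) (i j : ℕ) : rk u (min i n) j = rk u i j := by
  unfold rk
  congr 1
  apply filter_congr
  intro k _
  have := k.isLt
  omega

namespace AscShuffle

variable {p : ℕ} {v : Equiv.Perm (Fin n)}

theorem lt_of_apply_lt (hv : AscShuffle p v) {k m : Fin n} (hlt : v m < v k)
    (hblock : (v k : ℕ) < p ∨ p ≤ (v m : ℕ)) : m < k := by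
  rcases lt_trichotomy m k with hmk | rfl | hkm
  · exact hmk
  · exact absurd hlt (lt_irrefl _)
  · have hvkm : v k < v m := by
      rcases hblock with hsmall | hlarge
      · exact (hv k m hkm).1 ⟨by omega, by have := Fin.lt_def.1 hlt; omega⟩
      · exact (hv k m hkm).2 ⟨by have := Fin.lt_def.1 hlt; omega, by omega⟩
    exact absurd (hlt.trans hvkm) (lt_irrefl _)

theorem mem_prefixValues_of_le (hv : AscShuffle p v) {i x y : ℕ}
    (hx : x ∈ prefixValues v i) (hyx : y ≤ x) (hblock : x < p ∨ p ≤ y) :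
    y ∈ prefixValues v i := by
  obtain ⟨k, hki, rfl⟩ := mem_prefixValues.1 hx
  rcases hyx.eq_or_lt with rfl | hyx
  · exact hx
  have hyn : y < n := hyx.trans (v k).isLt
  set m := v.symm ⟨y, hyn⟩
  have hvm : (v m : ℕ) = y := by simp [m]
  have hmk : m < k := hv.lt_of_apply_lt (Fin.lt_def.2 (hvm ▸ hyx)) (hvm ▸ hblock)
  exact mem_prefixValues.2 ⟨m, (Fin.lt_def.1 hmk).trans hki, hvm⟩

theorem filter_lt_prefixValues_eq_Ico (hv : AscShuffle p v) (i : ℕ) :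
    {x ∈ prefixValues v i | x < p} = Ico 0 (0 + #{x ∈ prefixValues v i | x < p}) :=
  eq_Ico_add_card_of_le_mem (fun _ _ => Nat.zero_le _) fun x hx y _ hyx => by
    rw [mem_filter] at hx ⊢
    exact ⟨hv.mem_prefixValues_of_le hx.1 hyx (Or.inl hx.2), hyx.trans_lt hx.2⟩

theorem filter_le_prefixValues_eq_Ico (hv : AscShuffle p v) (i : ℕ) :
    {x ∈ prefixValues v i | p ≤ x} = Ico p (p + #{x ∈ prefixValues v i | p ≤ x}) :=
  eq_Ico_add_card_of_le_mem (fun _ hx => (mem_filter.1 hx).2) fun x hx y hpy hyx => by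
    rw [mem_filter] at hx ⊢
    exact ⟨hv.mem_prefixValues_of_le hx.1 hyx (Or.inr hpy), hpy⟩

end AscShuffle

end Permutations

theorem stmt4_general (p n : ℕ)
    (v : Equiv.Perm (Fin n)) (hv : AscShuffle p v)
    (w : Equiv.Perm (Fin n))
    (hw : ∀ i : ℕ, 1 ≤ i → i ≤ n → rk w i p = rk v i p) :
    BruhatLE v w := by
  intro i j
  have hsmall : #{x ∈ prefixValues w i | x < p} = #{x ∈ prefixValues v i | x < p} := by
    rw [← rk_eq_card_prefixValues, ← rk_eq_card_prefixValues, ← rk_min_left w, ← rk_min_left v]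
    rcases Nat.eq_zero_or_pos (min i n) with h0 | hpos
    · rw [h0, rk_zero_left, rk_zero_left]
    · exact hw _ hpos (min_le_right _ _)
  have hlarge : #{x ∈ prefixValues w i | p ≤ x} = #{x ∈ prefixValues v i | p ≤ x} := by
    have hw_split := card_filter_add_card_filter_not (s := prefixValues w i) (· < p)
    have hv_split := card_filter_add_card_filter_not (s := prefixValues v i) (· < p)
    simp only [not_lt] at hw_split hv_split
    have := card_prefixValues w v i
    omega
  rw [rk_eq_card_prefixValues, rk_eq_card_prefixValues, card_filter_lt_eq_add _ p,
    card_filter_lt_eq_add (prefixValues v i) p]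
  exact add_le_add
    (card_filter_lt_le_of_eq_Ico (by simp) (hv.filter_lt_prefixValues_eq_Ico i) hsmall j)
    (card_filter_lt_le_of_eq_Ico (fun _ hx => (mem_filter.1 hx).2)
      (hv.filter_le_prefixValues_eq_Ico i) hlarge j)

theorem stmt4 (p q n : ℕ) (hp : 0 < p) (hq : 0 < q) (hn : n = p + q)
    (v : Equiv.Perm (Fin n)) (hv : AscShuffle p v)
    (w : Equiv.Perm (Fin n))
    (hw : ∀ i : ℕ, 1 ≤ i → i ≤ n → rk w i p = rk v i p) :
    BruhatLE v w :=
  stmt4_general p n v hv w hw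
end

section
/- Let p, q be positive integers, n = p + q, and let u be a descending shuffle and v an ascending shuffle in S_n with u ≥ v in the Bruhat order. Then inv(u) − inv(v) = p(p−1)/2 + q(q−1)/2 + Σ_{(i,j) ∈ M(u,v)} (j − i). (This is the equality of the dimension l(u) − l(v) of the Richardson variety X_u^v with the dimension of the L-orbit corresponding to the clan γ(u,v).) -/
/-- `u` is a descending shuffle of `p,…,1` and `n,…,p+1`. -/
def DescShuffle (p : ℕ) {n : ℕ} (u : Equiv.Perm (Fin n)) : Prop :=
  ∀ i j : Fin n, i < j →
    ((u i : ℕ) + 1 ≤ p ∧ (u j : ℕ) + 1 ≤ p → u j < u i) ∧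
    (p < (u i : ℕ) + 1 ∧ p < (u j : ℕ) + 1 → u j < u i)

/-- Position `i` is an opener for the pair `(u,v)`: `u(i) > p` and `v(i) ≤ p`. -/
def IsOpener (p : ℕ) {n : ℕ} (u v : Equiv.Perm (Fin n)) (i : Fin n) : Prop :=
  p < (u i : ℕ) + 1 ∧ (v i : ℕ) + 1 ≤ p

/-- Position `j` is a closer for the pair `(u,v)`: `u(j) ≤ p` and `v(j) > p`. -/
def IsCloser (p : ℕ) {n : ℕ} (u v : Equiv.Perm (Fin n)) (j : Fin n) : Prop :=
  (u j : ℕ) + 1 ≤ p ∧ p < (v j : ℕ) + 1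

/-- One step of the left-to-right scan constructing the canonical matching.  The state is a
pair (stack of not-yet-matched openers, most recent on top; list of matched pairs so far).
At an opener we push it onto the stack; at a closer we match it with the top of the stack,
which is the largest unmatched opener to its left. -/
def cmStep (p : ℕ) {n : ℕ} (u v : Equiv.Perm (Fin n))
    (st : List (Fin n) × List (Fin n × Fin n)) (k : Fin n) :
    List (Fin n) × List (Fin n × Fin n) :=
  if p < (u k : ℕ) + 1 ∧ (v k : ℕ) + 1 ≤ p then
    (k :: st.1, st.2)
  else if (u k : ℕ) + 1 ≤ p ∧ p < (v k : ℕ) + 1 then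
    match st.1 with
    | [] => st
    | i :: s => (s, (i, k) :: st.2)
  else st

/-- The canonical matching `M(u,v)`, obtained by scanning positions from left to right and
matching each closer `j` with the largest opener `i < j` not already matched to an earlier
closer. -/
def canonicalMatching (p : ℕ) {n : ℕ} (u v : Equiv.Perm (Fin n)) : List (Fin n × Fin n) :=
  ((List.finRange n).foldl (cmStep p u v) ([], [])).2

/-- The number of inversions `inv(w) = #{(i,j) : i < j and w(i) > w(j)}`. -/
def invCount {n : ℕ} (w : Equiv.Perm (Fin n)) : ℕ :=
  (Finset.univ.filter (fun ij : Fin n × Fin n => ij.1 < ij.2 ∧ w ij.2 < w ij.1)).card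

/-!
For a shuffle `w`, whether a pair `i < j` is an inversion depends only on which of `w i`, `w j`
lie in `{1, …, p}`.  Writing `L_w` for the positions carrying these values, a descending
shuffle has `inv u = Σ_{j ∈ L_u} #{i < j} + C(q,2)` and an ascending one has
`inv v = Σ_{j ∈ L_v} #{i < j} - C(p,2)`.  Closers are `L_u \ L_v` and openers `L_v \ L_u`, so
`inv u - inv v - C(p,2) - C(q,2) = Σ closers - Σ openers`.

The Bruhat inequality `r_u(i,p) ≤ r_v(i,p)` says that every prefix contains at least as many
openers as closers, so the left-to-right stack scan never meets a closer with an empty stack;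
since `|L_u| = |L_v| = p` it also ends with an empty stack.  Every opener and every closer
then lies in exactly one matched pair, and `Σ_{(i,j) ∈ M} (j - i) = Σ closers - Σ openers`.
-/

open Finset

instance {p n : ℕ} (u v : Equiv.Perm (Fin n)) : DecidablePred (IsOpener p u v) :=
  fun _ => instDecidableAnd

instance {p n : ℕ} (u v : Equiv.Perm (Fin n)) : DecidablePred (IsCloser p u v) :=
  fun _ => instDecidableAnd

section StackMatching

variable {α : Type*} (P C : α → Prop) [DecidablePred P] [DecidablePred C]

def matchStep (st : List α × List (α × α)) (k : α) : List α × List (α × α) :=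
  if P k then (k :: st.1, st.2)
  else if C k then
    match st.1 with
    | [] => st
    | i :: s => (s, (i, k) :: st.2)
  else st

def matchWeight (f : α → ℤ) (st : List α × List (α × α)) : ℤ :=
  (st.2.map fun pr => f pr.2 - f pr.1).sum - (st.1.map f).sum

variable {P C}

lemma length_matchStep (hPC : ∀ k, P k → ¬ C k) (st : List α × List (α × α)) (a : α)
    (hst : C a → st.1 ≠ []) :
    (matchStep P C st a).1.length + (if C a then 1 else 0) =
      st.1.length + (if P a then 1 else 0) := by
  by_cases hP : P a
  · simp [matchStep, hP, hPC a hP]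
  by_cases hC : C a
  · obtain ⟨_ | ⟨i, s⟩, ps⟩ := st
    · exact absurd rfl (hst hC)
    · simp [matchStep, hP, hC]
  · simp [matchStep, hP, hC]

lemma matchWeight_matchStep (hPC : ∀ k, P k → ¬ C k) (f : α → ℤ)
    (st : List α × List (α × α)) (a : α) (hst : C a → st.1 ≠ []) :
    matchWeight f (matchStep P C st a) =
      matchWeight f st + (if C a then f a else 0) - (if P a then f a else 0) := by
  by_cases hP : P a
  · simp only [matchWeight, matchStep, hP, ↓reduceIte, List.map_cons, List.sum_cons, hPC a hP,
      add_zero]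
    ring
  by_cases hC : C a
  · obtain ⟨_ | ⟨i, s⟩, ps⟩ := st
    · exact absurd rfl (hst hC)
    · simp only [matchWeight, matchStep, hP, ↓reduceIte, hC, List.map_cons, List.sum_cons,
        sub_zero]
      ring
  · simp [matchStep, hP, hC]

theorem foldl_matchStep (hPC : ∀ k, P k → ¬ C k) (f : α → ℤ) :
    ∀ (l : List α) (st : List α × List (α × α)),
      (∀ i, (l.take i).countP (C ·) ≤ st.1.length + (l.take i).countP (P ·)) →
      (l.foldl (matchStep P C) st).1.length + l.countP (C ·) = st.1.length + l.countP (P ·) ∧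
      matchWeight f (l.foldl (matchStep P C) st) =
        matchWeight f st + ((l.filter (C ·)).map f).sum - ((l.filter (P ·)).map f).sum
  | [], st, _ => by simp
  | a :: l, st, hballot => by
    have hst : C a → st.1 ≠ [] := fun hC hnil => by
      have hP : ¬ P a := fun hP => hPC a hP hC
      simpa [hnil, hC, hP] using hballot 1
    have hlen := length_matchStep hPC st a hst
    obtain ⟨ihlen, ihweight⟩ := foldl_matchStep hPC f l (matchStep P C st a) fun i => by
      have := hballot (i + 1)
      simp only [List.take_succ_cons, List.countP_cons, decide_eq_true_eq] at this
      omega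
    refine ⟨?_, ?_⟩
    · simp only [List.foldl_cons, List.countP_cons, decide_eq_true_eq]
      omega
    · rw [List.foldl_cons, ihweight, matchWeight_matchStep hPC f st a hst]
      simp only [List.filter_cons, decide_eq_true_eq]
      split_ifs <;> simp only [List.map_cons, List.sum_cons, add_zero, sub_zero] <;> ring

end StackMatching

section FinRange

variable {n : ℕ} (C : Fin n → Prop) [DecidablePred C]

lemma countP_take_finRange (i : ℕ) :
    ((List.finRange n).take i).countP (C ·) = #{m : Fin n | (m : ℕ) < i ∧ C m} := by
  have hnd : ((List.finRange n).take i).Nodup :=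
    (List.nodup_finRange n).sublist (List.take_sublist _ _)
  rw [List.countP_eq_length_filter, ← List.toFinset_card_of_nodup (hnd.filter _)]
  congr 1
  ext m
  simp only [List.mem_toFinset, List.mem_filter, List.mem_take_iff_getElem, List.getElem_finRange,
    decide_eq_true_eq, mem_filter, mem_univ, true_and]
  constructor
  · rintro ⟨⟨j, hj, rfl⟩, hC⟩
    exact ⟨(lt_min_iff.1 hj).1, hC⟩
  · rintro ⟨hm, hC⟩
    exact ⟨⟨m, lt_min hm (by simp), rfl⟩, hC⟩

lemma countP_finRange : (List.finRange n).countP (C ·) = #{m : Fin n | C m} := by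
  simpa [List.take_of_length_le] using countP_take_finRange C n

lemma sum_map_filter_finRange (f : Fin n → ℤ) :
    (((List.finRange n).filter (C ·)).map f).sum = ∑ m with C m, f m := by
  rw [← List.sum_toFinset f ((List.nodup_finRange n).filter _), List.toFinset_filter,
    List.toFinset_finRange]
  simp

end FinRange

section Shuffles

variable {n : ℕ}

def lowPositions (p : ℕ) (w : Equiv.Perm (Fin n)) : Finset (Fin n) := {k | (w k : ℕ) < p}

lemma card_lowPositions (p : ℕ) (w : Equiv.Perm (Fin n)) : #(lowPositions p w) = min n p := by
  rw [← Fin.card_filter_val_lt]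
  exact card_nbij' w w.symm (fun k hk => by simpa [lowPositions] using hk)
    (fun i hi => by simpa [lowPositions] using hi) (fun k _ => by simp) (fun i _ => by simp)

lemma card_filter_lt_snd_mem (S : Finset (Fin n)) :
    #{ij : Fin n × Fin n | ij.1 < ij.2 ∧ ij.2 ∈ S} = ∑ j ∈ S, (j : ℕ) := by
  rw [card_filter, Fintype.sum_prod_type_right]
  simp only [sum_boole, Nat.cast_id]
  rw [← sum_subset (subset_univ S) fun j _ hj => by simp [hj]]
  refine sum_congr rfl fun j hj => ?_
  simp [hj, filter_gt_eq_Iio]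

theorem invCount_of_descShuffle {p : ℕ} {u : Equiv.Perm (Fin n)} (hu : DescShuffle p u) :
    invCount u = ∑ j ∈ lowPositions p u, (j : ℕ) + (n - p).choose 2 := by
  set L := lowPositions p u
  have hsplit : ({ij : Fin n × Fin n | ij.1 < ij.2 ∧ u ij.2 < u ij.1} : Finset _) =
      ({ij : Fin n × Fin n | ij.1 < ij.2 ∧ ij.2 ∈ L} : Finset _) ∪
        {ij ∈ Lᶜ ×ˢ Lᶜ | ij.1 < ij.2} := by
    ext ⟨i, j⟩
    have := hu i j
    simp only [mem_filter, mem_univ, true_and, mem_union, mem_product, mem_compl, L,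
      lowPositions, Fin.lt_def] at this ⊢
    omega
  have hdisj : Disjoint ({ij : Fin n × Fin n | ij.1 < ij.2 ∧ ij.2 ∈ L} : Finset _)
      {ij ∈ Lᶜ ×ˢ Lᶜ | ij.1 < ij.2} :=
    disjoint_left.2 fun ij h₁ h₂ => by
      simp only [mem_filter, mem_univ, true_and, mem_product, mem_compl] at h₁ h₂
      exact h₂.1.2 h₁.2
  rw [invCount, hsplit, card_union_of_disjoint hdisj, card_filter_lt_snd_mem,
    card_product_filter_lt, card_compl, Fintype.card_fin, card_lowPositions]
  congr 2
  omega

theorem invCount_add_choose_two_of_ascShuffle {p : ℕ} {v : Equiv.Perm (Fin n)}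
    (hv : AscShuffle p v) (hpn : p ≤ n) :
    invCount v + p.choose 2 = ∑ j ∈ lowPositions p v, (j : ℕ) := by
  set L := lowPositions p v
  have hsplit : ({ij : Fin n × Fin n | ij.1 < ij.2 ∧ ij.2 ∈ L} : Finset _) =
      ({ij : Fin n × Fin n | ij.1 < ij.2 ∧ v ij.2 < v ij.1} : Finset _) ∪
        {ij ∈ L ×ˢ L | ij.1 < ij.2} := by
    ext ⟨i, j⟩
    have := hv i j
    simp only [mem_filter, mem_univ, true_and, mem_union, mem_product, L,
      lowPositions, Fin.lt_def] at this ⊢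
    omega
  have hdisj : Disjoint ({ij : Fin n × Fin n | ij.1 < ij.2 ∧ v ij.2 < v ij.1} : Finset _)
      {ij ∈ L ×ˢ L | ij.1 < ij.2} :=
    disjoint_left.2 fun ij h₁ h₂ => by
      simp only [mem_filter, mem_univ, true_and, mem_product, L, lowPositions] at h₁ h₂
      exact lt_asymm h₁.2 ((hv _ _ h₁.1).1 ⟨by omega, by omega⟩)
  rw [← card_filter_lt_snd_mem, hsplit, card_union_of_disjoint hdisj, card_product_filter_lt,
    card_lowPositions, min_eq_right hpn, invCount]

end Shuffles

section CanonicalMatching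

variable {n p : ℕ} {u v : Equiv.Perm (Fin n)}

lemma cmStep_eq_matchStep :
    cmStep p u v = matchStep (IsOpener p u v) (IsCloser p u v) := by
  funext ⟨s, ps⟩ k
  cases s <;> rfl

lemma not_isCloser_of_isOpener (k : Fin n) (hk : IsOpener p u v k) : ¬ IsCloser p u v k :=
  fun hk' => by unfold IsOpener at hk; unfold IsCloser at hk'; omega

lemma filter_isCloser_eq_sdiff :
    ({k | IsCloser p u v k} : Finset _) = lowPositions p u \ lowPositions p v := by
  ext k
  simp [lowPositions, IsCloser]

lemma filter_isOpener_eq_sdiff :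
    ({k | IsOpener p u v k} : Finset _) = lowPositions p v \ lowPositions p u := by
  ext k
  simp [lowPositions, IsOpener, and_comm]

lemma card_filter_isCloser_add (s : Finset (Fin n)) :
    #{m ∈ s | IsCloser p u v m} + #{m ∈ s | (v m : ℕ) < p} =
      #{m ∈ s | IsOpener p u v m} + #{m ∈ s | (u m : ℕ) < p} := by
  rw [← card_union_of_disjoint, ← card_union_of_disjoint, ← filter_or, ← filter_or]
  · congr 1
    refine filter_congr fun m _ => ?_
    simp only [IsCloser, IsOpener]
    omega
  · exact disjoint_filter.2 fun m _ h₁ h₂ => by unfold IsOpener at h₁; omega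
  · exact disjoint_filter.2 fun m _ h₁ h₂ => by unfold IsCloser at h₁; omega

lemma card_filter_isCloser_le (huv : BruhatLE v u) (i : ℕ) :
    #{m : Fin n | (m : ℕ) < i ∧ IsCloser p u v m} ≤
      #{m : Fin n | (m : ℕ) < i ∧ IsOpener p u v m} := by
  have hcount := card_filter_isCloser_add (p := p) (u := u) (v := v) {m : Fin n | (m : ℕ) < i}
  have hrk : #{m : Fin n | (m : ℕ) < i ∧ (u m : ℕ) < p} ≤
      #{m : Fin n | (m : ℕ) < i ∧ (v m : ℕ) < p} := huv i p
  simp only [filter_filter] at hcount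
  omega

lemma card_filter_isCloser_eq : #{m | IsCloser p u v m} = #{m | IsOpener p u v m} := by
  have hcount := card_filter_isCloser_add (p := p) (u := u) (v := v) univ
  have hu := card_lowPositions p u
  have hv := card_lowPositions p v
  unfold lowPositions at hu hv
  omega

theorem sum_canonicalMatching (huv : BruhatLE v u) :
    ((canonicalMatching p u v).map fun pr => ((pr.2 : ℕ) : ℤ) - ((pr.1 : ℕ) : ℤ)).sum =
      ∑ k with IsCloser p u v k, ((k : ℕ) : ℤ) -
        ∑ k with IsOpener p u v k, ((k : ℕ) : ℤ) := by
  obtain ⟨hlen, hweight⟩ := foldl_matchStep (not_isCloser_of_isOpener (p := p))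
    (fun k => ((k : ℕ) : ℤ)) (List.finRange n) ([], []) fun i => by
      simpa [countP_take_finRange] using card_filter_isCloser_le huv i
  rw [countP_finRange, countP_finRange, card_filter_isCloser_eq] at hlen
  have hnil : ((List.finRange n).foldl (matchStep (IsOpener p u v) (IsCloser p u v)) ([], [])).1
      = [] := List.eq_nil_of_length_eq_zero (by simpa using hlen)
  rw [sum_map_filter_finRange, sum_map_filter_finRange] at hweight
  simpa [matchWeight, hnil, canonicalMatching, cmStep_eq_matchStep] using hweight

end CanonicalMatching

theorem stmt13_general (p q n : ℕ) (hn : n = p + q)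
    (u v : Equiv.Perm (Fin n)) (hu : DescShuffle p u) (hv : AscShuffle p v)
    (huv : BruhatLE v u) :
    (invCount u : ℤ) - (invCount v : ℤ) =
      ((p * (p - 1) / 2 + q * (q - 1) / 2 : ℕ) : ℤ) +
        ((canonicalMatching p u v).map
          (fun pr => ((pr.2 : ℕ) : ℤ) - ((pr.1 : ℕ) : ℤ))).sum := by
  have hinvu := invCount_of_descShuffle hu
  have hinvv := invCount_add_choose_two_of_ascShuffle hv (by omega)
  rw [sum_canonicalMatching huv, filter_isCloser_eq_sdiff, filter_isOpener_eq_sdiff,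
    sum_sdiff_sub_sum_sdiff, ← Nat.choose_two_right, ← Nat.choose_two_right,
    show q = n - p by omega]
  push_cast [← Nat.cast_sum] at hinvu hinvv ⊢
  omega

theorem stmt13 (p q n : ℕ) (hp : 0 < p) (hq : 0 < q) (hn : n = p + q)
    (u v : Equiv.Perm (Fin n)) (hu : DescShuffle p u) (hv : AscShuffle p v)
    (huv : BruhatLE v u) :
    (invCount u : ℤ) - (invCount v : ℤ) =
      ((p * (p - 1) / 2 + q * (q - 1) / 2 : ℕ) : ℤ) +
        ((canonicalMatching p u v).map
          (fun pr => ((pr.2 : ℕ) : ℤ) - ((pr.1 : ℕ) : ℤ))).sum :=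
  stmt13_general p q n hn u v hu hv huv
end
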